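/- arXiv:2004.06471 — 2 statements merged into one kernel-verified Lean document; each statement's English description precedes it below -/
import Mathlib

section
/- (Small data uniqueness, Lemma 2.1.) If ν⁻¹ M (2K₁ + κ⁻¹ M K₂²) < 1 and ν⁻¹ κ⁻¹ Ri² C_P⁴ < 1, then the discrete stationary Boussinesq system has at most one solution: if (u,θ) and (w,z) in V × W both solve the system, then u = w and θ = z. -/
/-!
Subtracting the two systems and testing with the differences `e = u - w`, `p = θ - z`, skew-symmetry
of `b` and `b*` in their last two arguments leaves the energy identities
`ν‖e‖² = Ri c(p, e) - b(e, u, e)` and `κ‖p‖² = -b*(e, θ, p)`.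
The a priori bounds `‖θ‖ ≤ K₂` and `‖u‖ ≤ K₁` (the systems tested with their own solution) and
Young's inequality on the two cross terms give `2νκ‖e‖² ≤ (Ri²C_P⁴ + 2κMK₁ + M²K₂²)‖e‖²`, and the
small data conditions make the bracket smaller than `2νκ`. Hence `e = 0`, and then `κ‖p‖² ≤ 0`.
-/

open scoped RealInnerProductSpace

section General

variable {E X Y : Type*} [NormedAddCommGroup E] [InnerProductSpace ℝ E]
  [AddCommGroup X] [Module ℝ X] [AddCommGroup Y] [Module ℝ Y]

theorem mul_norm_le_of_mul_inner_self_le {x : E} {a C : ℝ} (hC : 0 ≤ C)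
    (h : a * ⟪x, x⟫ ≤ C * ‖x‖) : a * ‖x‖ ≤ C := by
  rcases (norm_nonneg x).eq_or_lt with hx | hx
  · rw [← hx, mul_zero]
    exact hC
  · rw [real_inner_self_eq_norm_sq, sq, ← mul_assoc] at h
    exact le_of_mul_le_mul_right h hx

theorem ContinuousLinearMap.apply_le_opNorm_mul (φ : E →L[ℝ] ℝ) (x : E) : φ x ≤ ‖φ‖ * ‖x‖ :=
  (le_abs_self _).trans (φ.le_opNorm x)

theorem trilinear_sub_sub_of_skew (B : X →ₗ[ℝ] Y →ₗ[ℝ] Y →ₗ[ℝ] ℝ) (hB : ∀ x y, B x y y = 0)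
    (x₁ x₂ : X) (y₁ y₂ : Y) :
    B x₁ y₁ (y₁ - y₂) - B x₂ y₂ (y₁ - y₂) = B (x₁ - x₂) y₁ (y₁ - y₂) := by
  have h := hB x₂ (y₁ - y₂)
  simp only [map_sub, LinearMap.sub_apply] at h ⊢
  linear_combination h

end General

theorem eq_zero_of_energy_le_of_small {ν κ a M K₁ K₂ E P : ℝ} (hν : 0 < ν) (hκ : 0 < κ)
    (h : ν * E ^ 2 + κ * P ^ 2 ≤ a * P * E + M * K₁ * E ^ 2 + M * K₂ * E * P)
    (hsd1 : ν⁻¹ * M * (2 * K₁ + κ⁻¹ * M * K₂ ^ 2) < 1) (hsd2 : ν⁻¹ * κ⁻¹ * a ^ 2 < 1) :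
    E = 0 ∧ P = 0 := by
  rw [mul_assoc, inv_mul_lt_iff₀ hν, mul_one] at hsd1
  rw [mul_assoc, inv_mul_lt_iff₀ hν, inv_mul_lt_iff₀ hκ] at hsd2
  have hsmall₁ : 2 * κ * M * K₁ + M ^ 2 * K₂ ^ 2 < ν * κ :=
    calc 2 * κ * M * K₁ + M ^ 2 * K₂ ^ 2 = κ * (M * (2 * K₁ + κ⁻¹ * M * K₂ ^ 2)) := by field_simp
      _ < κ * ν := by gcongr
      _ = ν * κ := mul_comm κ ν
  have hsmall₂ : a ^ 2 < ν * κ := by linarith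
  -- Young: `2κ·aPE ≤ a²E² + κ²P²` and `2κ·MK₂EP ≤ M²K₂²E² + κ²P²`
  have young : 2 * κ * (ν * E ^ 2) ≤ (a ^ 2 + 2 * κ * M * K₁ + M ^ 2 * K₂ ^ 2) * E ^ 2 := by
    nlinarith [sq_nonneg (a * E - κ * P), sq_nonneg (M * K₂ * E - κ * P)]
  have hE : E = 0 := (sq_nonpos_iff _).mp (by nlinarith [sq_nonneg E])
  subst hE
  have hκP : κ * P ^ 2 ≤ 0 := by simpa using h
  exact ⟨rfl, (sq_nonpos_iff _).mp (nonpos_of_mul_nonpos_right hκP hκ)⟩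

section Boussinesq

variable {V W : Type*} [NormedAddCommGroup V] [InnerProductSpace ℝ V]
  [NormedAddCommGroup W] [InnerProductSpace ℝ W]
  {ν κ Ri M CP : ℝ} {b : V →ₗ[ℝ] V →ₗ[ℝ] V →ₗ[ℝ] ℝ} {bs : V →ₗ[ℝ] W →ₗ[ℝ] W →ₗ[ℝ] ℝ}
  {c : W →ₗ[ℝ] V →ₗ[ℝ] ℝ} {f : V →L[ℝ] ℝ} {γ : W →L[ℝ] ℝ} {u w : V} {θ z : W}

theorem temperature_norm_le (hbs0 : ∀ (u : V) (φ : W), bs u φ φ = 0)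
    (hθ : ∀ χ : W, bs u θ χ + κ * ⟪θ, χ⟫ = γ χ) : κ * ‖θ‖ ≤ ‖γ‖ := by
  refine mul_norm_le_of_mul_inner_self_le (norm_nonneg γ) ?_
  calc κ * ⟪θ, θ⟫ = γ θ := by rw [← hθ θ, hbs0, zero_add]
    _ ≤ ‖γ‖ * ‖θ‖ := γ.apply_le_opNorm_mul θ

theorem velocity_norm_le (hRi : 0 ≤ Ri) (hb0 : ∀ u v : V, b u v v = 0)
    (hc : ∀ (θ : W) (v : V), |c θ v| ≤ CP ^ 2 * ‖θ‖ * ‖v‖)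
    (hu : ∀ v : V, b u u v + ν * ⟪u, v⟫ = Ri * c θ v + f v) :
    ν * ‖u‖ ≤ Ri * CP ^ 2 * ‖θ‖ + ‖f‖ := by
  refine mul_norm_le_of_mul_inner_self_le (by positivity) ?_
  have hcu : Ri * c θ u ≤ Ri * (CP ^ 2 * ‖θ‖ * ‖u‖) :=
    mul_le_mul_of_nonneg_left ((le_abs_self _).trans (hc θ u)) hRi
  calc ν * ⟪u, u⟫ = Ri * c θ u + f u := by rw [← hu u, hb0, zero_add]
    _ ≤ Ri * (CP ^ 2 * ‖θ‖ * ‖u‖) + ‖f‖ * ‖u‖ := add_le_add hcu (f.apply_le_opNorm_mul u)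
    _ = (Ri * CP ^ 2 * ‖θ‖ + ‖f‖) * ‖u‖ := by ring

theorem velocity_energy_eq (hb0 : ∀ u v : V, b u v v = 0)
    (hu : ∀ v : V, b u u v + ν * ⟪u, v⟫ = Ri * c θ v + f v)
    (hw : ∀ v : V, b w w v + ν * ⟪w, v⟫ = Ri * c z v + f v) :
    ν * ‖u - w‖ ^ 2 = Ri * c (θ - z) (u - w) - b (u - w) u (u - w) := by
  have hdiff := trilinear_sub_sub_of_skew b hb0 u w u w
  rw [← real_inner_self_eq_norm_sq, inner_sub_left, map_sub c θ z, LinearMap.sub_apply]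
  linear_combination hu (u - w) - hw (u - w) - hdiff

theorem temperature_energy_eq (hbs0 : ∀ (u : V) (φ : W), bs u φ φ = 0)
    (hθ : ∀ χ : W, bs u θ χ + κ * ⟪θ, χ⟫ = γ χ) (hz : ∀ χ : W, bs w z χ + κ * ⟪z, χ⟫ = γ χ) :
    κ * ‖θ - z‖ ^ 2 = -bs (u - w) θ (θ - z) := by
  have hdiff := trilinear_sub_sub_of_skew bs hbs0 u w θ z
  rw [← real_inner_self_eq_norm_sq, inner_sub_left]
  linear_combination hθ (θ - z) - hz (θ - z) - hdiff

theorem energy_le {K₁ K₂ : ℝ} (hRi : 0 ≤ Ri) (hM : 0 ≤ M)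
    (hb : ∀ u v w : V, |b u v w| ≤ M * ‖u‖ * ‖v‖ * ‖w‖)
    (hbs : ∀ (u : V) (φ ψ : W), |bs u φ ψ| ≤ M * ‖u‖ * ‖φ‖ * ‖ψ‖)
    (hc : ∀ (θ : W) (v : V), |c θ v| ≤ CP ^ 2 * ‖θ‖ * ‖v‖) (huK : ‖u‖ ≤ K₁) (hθK : ‖θ‖ ≤ K₂)
    (hvel : ν * ‖u - w‖ ^ 2 = Ri * c (θ - z) (u - w) - b (u - w) u (u - w))
    (htemp : κ * ‖θ - z‖ ^ 2 = -bs (u - w) θ (θ - z)) :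
    ν * ‖u - w‖ ^ 2 + κ * ‖θ - z‖ ^ 2 ≤ Ri * CP ^ 2 * ‖θ - z‖ * ‖u - w‖
      + M * K₁ * ‖u - w‖ ^ 2 + M * K₂ * ‖u - w‖ * ‖θ - z‖ := by
  have hbuoy : Ri * c (θ - z) (u - w) ≤ Ri * CP ^ 2 * ‖θ - z‖ * ‖u - w‖ := by
    have := mul_le_mul_of_nonneg_left ((le_abs_self _).trans (hc (θ - z) (u - w))) hRi
    linarith
  have hconv : -b (u - w) u (u - w) ≤ M * K₁ * ‖u - w‖ ^ 2 :=
    calc -b (u - w) u (u - w) ≤ M * ‖u - w‖ * ‖u‖ * ‖u - w‖ := (neg_le_abs _).trans (hb _ _ _)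
      _ ≤ M * ‖u - w‖ * K₁ * ‖u - w‖ := by gcongr
      _ = M * K₁ * ‖u - w‖ ^ 2 := by ring
  have hadv : -bs (u - w) θ (θ - z) ≤ M * K₂ * ‖u - w‖ * ‖θ - z‖ :=
    calc -bs (u - w) θ (θ - z) ≤ M * ‖u - w‖ * ‖θ‖ * ‖θ - z‖ := (neg_le_abs _).trans (hbs _ _ _)
      _ ≤ M * ‖u - w‖ * K₂ * ‖θ - z‖ := by gcongr
      _ = M * K₂ * ‖u - w‖ * ‖θ - z‖ := by ring
  linarith

end Boussinesq

theorem boussinesq_small_data_uniqueness_general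
    {V W : Type*} [NormedAddCommGroup V] [InnerProductSpace ℝ V]
    [NormedAddCommGroup W] [InnerProductSpace ℝ W]
    (ν κ Ri M CP : ℝ) (hν : 0 < ν) (hκ : 0 < κ) (hRi : 0 < Ri) (hM : 0 < M)
    (b : V →ₗ[ℝ] V →ₗ[ℝ] V →ₗ[ℝ] ℝ)
    (hb0 : ∀ u v : V, b u v v = 0)
    (hb : ∀ u v w : V, |b u v w| ≤ M * ‖u‖ * ‖v‖ * ‖w‖)
    (bs : V →ₗ[ℝ] W →ₗ[ℝ] W →ₗ[ℝ] ℝ)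
    (hbs0 : ∀ (u : V) (φ : W), bs u φ φ = 0)
    (hbs : ∀ (u : V) (φ ψ : W), |bs u φ ψ| ≤ M * ‖u‖ * ‖φ‖ * ‖ψ‖)
    (c : W →ₗ[ℝ] V →ₗ[ℝ] ℝ)
    (hc : ∀ (θ : W) (v : V), |c θ v| ≤ CP ^ 2 * ‖θ‖ * ‖v‖)
    (f : V →L[ℝ] ℝ) (γ : W →L[ℝ] ℝ)
    (hsd1 : ν⁻¹ * M * (2 * (Ri * CP ^ 2 * ν⁻¹ * κ⁻¹ * ‖γ‖ + ν⁻¹ * ‖f‖) + κ⁻¹ * M * (κ⁻¹ * ‖γ‖) ^ 2) < 1)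
    (hsd2 : ν⁻¹ * κ⁻¹ * Ri ^ 2 * CP ^ 4 < 1)
    (u w : V) (θ z : W)
    (hu : ∀ v : V, b u u v + ν * ⟪u, v⟫ = Ri * c θ v + f v)
    (hθ : ∀ χ : W, bs u θ χ + κ * ⟪θ, χ⟫ = γ χ)
    (hw : ∀ v : V, b w w v + ν * ⟪w, v⟫ = Ri * c z v + f v)
    (hz : ∀ χ : W, bs w z χ + κ * ⟪z, χ⟫ = γ χ) :
    u = w ∧ θ = z := by
  have hθK : ‖θ‖ ≤ κ⁻¹ * ‖γ‖ := by
    rw [le_inv_mul_iff₀ hκ]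
    exact temperature_norm_le hbs0 hθ
  have huK : ‖u‖ ≤ Ri * CP ^ 2 * ν⁻¹ * κ⁻¹ * ‖γ‖ + ν⁻¹ * ‖f‖ := by
    have hνu := velocity_norm_le hRi.le hb0 hc hu
    rw [← le_div_iff₀' hν] at hνu
    calc ‖u‖ ≤ (Ri * CP ^ 2 * ‖θ‖ + ‖f‖) / ν := hνu
      _ ≤ (Ri * CP ^ 2 * (κ⁻¹ * ‖γ‖) + ‖f‖) / ν := by gcongr
      _ = _ := by ring
  have henergy := energy_le hRi.le hM.le hb hbs hc huK hθK
    (velocity_energy_eq hb0 hu hw) (temperature_energy_eq hbs0 hθ hz)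
  obtain ⟨he, hp⟩ := eq_zero_of_energy_le_of_small hν hκ henergy hsd1
    (by rwa [mul_pow, ← pow_mul, ← mul_assoc])
  exact ⟨sub_eq_zero.mp (norm_eq_zero.mp he), sub_eq_zero.mp (norm_eq_zero.mp hp)⟩

/-- Small data uniqueness (Lemma 2.1): under the small data conditions, the discrete
stationary Boussinesq system has at most one solution. -/
theorem boussinesq_small_data_uniqueness
    {V W : Type*} [NormedAddCommGroup V] [InnerProductSpace ℝ V] [FiniteDimensional ℝ V]
    [NormedAddCommGroup W] [InnerProductSpace ℝ W] [FiniteDimensional ℝ W]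
    (ν κ Ri M CP : ℝ) (hν : 0 < ν) (hκ : 0 < κ) (hRi : 0 < Ri) (hM : 0 < M) (hCP : 0 < CP)
    (b : V →ₗ[ℝ] V →ₗ[ℝ] V →ₗ[ℝ] ℝ)
    (hb0 : ∀ u v : V, b u v v = 0)
    (hb : ∀ u v w : V, |b u v w| ≤ M * ‖u‖ * ‖v‖ * ‖w‖)
    (bs : V →ₗ[ℝ] W →ₗ[ℝ] W →ₗ[ℝ] ℝ)
    (hbs0 : ∀ (u : V) (φ : W), bs u φ φ = 0)
    (hbs : ∀ (u : V) (φ ψ : W), |bs u φ ψ| ≤ M * ‖u‖ * ‖φ‖ * ‖ψ‖)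
    (c : W →ₗ[ℝ] V →ₗ[ℝ] ℝ)
    (hc : ∀ (θ : W) (v : V), |c θ v| ≤ CP ^ 2 * ‖θ‖ * ‖v‖)
    (f : V →L[ℝ] ℝ) (γ : W →L[ℝ] ℝ)
    (hsd1 : ν⁻¹ * M * (2 * (Ri * CP ^ 2 * ν⁻¹ * κ⁻¹ * ‖γ‖ + ν⁻¹ * ‖f‖) + κ⁻¹ * M * (κ⁻¹ * ‖γ‖) ^ 2) < 1)
    (hsd2 : ν⁻¹ * κ⁻¹ * Ri ^ 2 * CP ^ 4 < 1)
    (u w : V) (θ z : W)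
    (hu : ∀ v : V, b u u v + ν * ⟪u, v⟫ = Ri * c θ v + f v)
    (hθ : ∀ χ : W, bs u θ χ + κ * ⟪θ, χ⟫ = γ χ)
    (hw : ∀ v : V, b w w v + ν * ⟪w, v⟫ = Ri * c z v + f v)
    (hz : ∀ χ : W, bs w z χ + κ * ⟪z, χ⟫ = γ χ) :
    u = w ∧ θ = z :=
  boussinesq_small_data_uniqueness_general ν κ Ri M CP hν hκ hRi hM b hb0 hb bs hbs0 hbs c hc f γ
    hsd1 hsd2 u w θ z hu hθ hw hz
end

section
/- (Lemma 3.5, Lipschitz continuity of G'.) Assume the small data condition. Then for all (u,θ), (h,s), (w,z) ∈ V × W, ‖G'(u+h, θ+s; w, z) − G'(u,θ; w, z)‖_B ≤ Ĉ_G ‖(h,s)‖_B ‖(w,z)‖_B, where Ĉ_G = 2 ν⁻¹ η^{-3/2} M² (2K₁² + 9K₂²)^{1/2}. -/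
/-!
Each quantity to be estimated (`G`, `G'`, and the increments of `G` and `G'` from `(u, θ)` to
`(u + h, θ + s)`) solves a problem `b(u, q, ·) + ν⟪q, ·⟫ = F` or its temperature analogue. Testing
with `q` kills the skew-symmetric convection term, so `‖q‖ ≤ ν⁻¹ ‖F‖₋₁`. For the increments, `F`
consists of trilinear terms in quantities bounded before, so the estimates cascade: `G` is bounded
by `K₁, K₂`; `G'(·; w, z)` and the increment of `G` are `O(‖w‖)` and `O(‖h‖)`; the increment of `G'`
is `O(‖h‖ ‖w‖)`. The buoyancy term is absorbed into the temperature bound because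
`Ri C_P² < η ≤ κ`.
-/

open scoped RealInnerProductSpace

theorem norm_le_of_coercive_eq {E : Type*} [NormedAddCommGroup E] [InnerProductSpace ℝ E]
    {B : E →ₗ[ℝ] E →ₗ[ℝ] ℝ} {F : E → ℝ} {q : E} {κ C : ℝ} (hκ : 0 < κ) (hC : 0 ≤ C)
    (hB : 0 ≤ B q q) (hF : ∀ χ, F χ ≤ C * ‖χ‖) (heq : ∀ χ, B q χ + κ * ⟪q, χ⟫ = F χ) :
    ‖q‖ ≤ κ⁻¹ * C := by
  have energy : κ * ‖q‖ ^ 2 ≤ C * ‖q‖ := by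
    have tested := heq q
    rw [real_inner_self_eq_norm_sq] at tested
    linarith [hF q]
  rw [le_inv_mul_iff₀ hκ]
  rcases (norm_nonneg q).eq_or_lt with hq | hq
  · rw [← hq, mul_zero]; exact hC
  · exact le_of_mul_le_mul_right (by rwa [mul_assoc, ← sq]) hq

def IsSolutionOperator {V W : Type*} [NormedAddCommGroup V] [InnerProductSpace ℝ V]
    [NormedAddCommGroup W] [InnerProductSpace ℝ W] (b : V →ₗ[ℝ] V →ₗ[ℝ] V →ₗ[ℝ] ℝ)
    (bs : V →ₗ[ℝ] W →ₗ[ℝ] W →ₗ[ℝ] ℝ) (c : W →ₗ[ℝ] V →ₗ[ℝ] ℝ) (ν κ Ri : ℝ)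
    (f : V →L[ℝ] ℝ) (γ : W →L[ℝ] ℝ) (G₁ : V → W → V) (G₂ : V → W → W) : Prop :=
  ∀ (u : V) (θ : W),
    (∀ v : V, b u (G₁ u θ) v + ν * ⟪G₁ u θ, v⟫ = Ri * c (G₂ u θ) v + f v) ∧
    (∀ χ : W, bs u (G₂ u θ) χ + κ * ⟪G₂ u θ, χ⟫ = γ χ)

def IsSolutionOperatorDeriv {V W : Type*} [NormedAddCommGroup V] [InnerProductSpace ℝ V]
    [NormedAddCommGroup W] [InnerProductSpace ℝ W] (b : V →ₗ[ℝ] V →ₗ[ℝ] V →ₗ[ℝ] ℝ)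
    (bs : V →ₗ[ℝ] W →ₗ[ℝ] W →ₗ[ℝ] ℝ) (c : W →ₗ[ℝ] V →ₗ[ℝ] ℝ) (ν κ Ri : ℝ)
    (G₁ : V → W → V) (G₂ : V → W → W)
    (G₁' : V → W → V → W → V) (G₂' : V → W → V → W → W) : Prop :=
  ∀ (u : V) (θ : W) (h : V) (s : W),
    (∀ v : V, b h (G₁ u θ) v + b u (G₁' u θ h s) v + ν * ⟪G₁' u θ h s, v⟫
        = Ri * c (G₂' u θ h s) v) ∧
    (∀ χ : W, bs h (G₂ u θ) χ + bs u (G₂' u θ h s) χ + κ * ⟪G₂' u θ h s, χ⟫ = 0)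

section Boussinesq

variable {V W : Type*} [NormedAddCommGroup V] [InnerProductSpace ℝ V]
  [NormedAddCommGroup W] [InnerProductSpace ℝ W] {ν κ Ri M CP : ℝ}
  {b : V →ₗ[ℝ] V →ₗ[ℝ] V →ₗ[ℝ] ℝ} {bs : V →ₗ[ℝ] W →ₗ[ℝ] W →ₗ[ℝ] ℝ} {c : W →ₗ[ℝ] V →ₗ[ℝ] ℝ}

theorem norm_le_of_velocity_eq (hν : 0 < ν) (hRi : 0 ≤ Ri) (hb0 : ∀ u v : V, b u v v = 0)
    (hc : ∀ (θ : W) (v : V), |c θ v| ≤ CP ^ 2 * ‖θ‖ * ‖v‖) {u q : V} {g : W} {F : V → ℝ}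
    {C : ℝ} (hC : 0 ≤ C) (hF : ∀ v, F v ≤ C * ‖v‖)
    (heq : ∀ v, b u q v + ν * ⟪q, v⟫ = Ri * c g v + F v) :
    ‖q‖ ≤ ν⁻¹ * (Ri * CP ^ 2 * ‖g‖ + C) :=
  norm_le_of_coercive_eq hν (by positivity) (hb0 u q).ge
    (fun v => by
      have hbuoyancy := mul_le_mul_of_nonneg_left (le_of_abs_le (hc g v)) hRi
      linarith [hF v])
    heq

theorem norm_le_of_linearized_temperature_eq (hκ : 0 < κ) (hM : 0 ≤ M)
    (hbs0 : ∀ (u : V) (φ : W), bs u φ φ = 0)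
    (hbs : ∀ (u : V) (φ ψ : W), |bs u φ ψ| ≤ M * ‖u‖ * ‖φ‖ * ‖ψ‖)
    {w u : V} {p q : W} {K : ℝ} (hp : ‖p‖ ≤ K)
    (heq : ∀ χ, bs w p χ + bs u q χ + κ * ⟪q, χ⟫ = 0) :
    ‖q‖ ≤ κ⁻¹ * M * K * ‖w‖ :=
  calc ‖q‖ ≤ κ⁻¹ * (M * ‖w‖ * ‖p‖) :=
        norm_le_of_coercive_eq (F := fun χ => -bs w p χ) hκ (by positivity) (hbs0 u q).ge
          (fun χ => (neg_le_abs _).trans (hbs w p χ)) (fun χ => by linarith [heq χ])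
    _ ≤ κ⁻¹ * (M * ‖w‖ * K) := by gcongr
    _ = κ⁻¹ * M * K * ‖w‖ := by ring

theorem norm_le_of_linearized_velocity_eq (hν : 0 < ν) (hκ : 0 < κ) (hRi : 0 ≤ Ri)
    (hM : 0 ≤ M) (hb0 : ∀ u v : V, b u v v = 0)
    (hb : ∀ u v w : V, |b u v w| ≤ M * ‖u‖ * ‖v‖ * ‖w‖)
    (hc : ∀ (θ : W) (v : V), |c θ v| ≤ CP ^ 2 * ‖θ‖ * ‖v‖) (hRC : Ri * CP ^ 2 ≤ κ)
    {w u p q : V} {g : W} {K₁ K₂ : ℝ} (hp : ‖p‖ ≤ K₁) (hg : ‖g‖ ≤ κ⁻¹ * M * K₂ * ‖w‖)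
    (heq : ∀ v, b w p v + b u q v + ν * ⟪q, v⟫ = Ri * c g v) :
    ‖q‖ ≤ ν⁻¹ * M * (K₁ + K₂) * ‖w‖ :=
  calc ‖q‖ ≤ ν⁻¹ * (Ri * CP ^ 2 * ‖g‖ + M * ‖w‖ * ‖p‖) :=
        norm_le_of_velocity_eq (F := fun v => -b w p v) hν hRi hb0 hc (by positivity)
          (fun v => (neg_le_abs _).trans (hb w p v)) (fun v => by linarith [heq v])
    _ ≤ ν⁻¹ * (κ * (κ⁻¹ * M * K₂ * ‖w‖) + M * ‖w‖ * K₁) := by gcongr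
    _ = ν⁻¹ * M * (K₁ + K₂) * ‖w‖ := by field_simp; ring

variable {f : V →L[ℝ] ℝ} {γ : W →L[ℝ] ℝ} {G₁ : V → W → V} {G₂ : V → W → W}
  {G₁' : V → W → V → W → V} {G₂' : V → W → V → W → W} {K₁ K₂ : ℝ}

theorem norm_G₂_le (hκ : 0 < κ) (hbs0 : ∀ (u : V) (φ : W), bs u φ φ = 0)
    (hG : IsSolutionOperator b bs c ν κ Ri f γ G₁ G₂) (u : V) (θ : W) :
    ‖G₂ u θ‖ ≤ κ⁻¹ * ‖γ‖ :=
  norm_le_of_coercive_eq hκ (norm_nonneg γ) (hbs0 u _).ge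
    (fun χ => (Real.le_norm_self _).trans (γ.le_opNorm χ)) (hG u θ).2

theorem norm_G₁_le (hν : 0 < ν) (hκ : 0 < κ) (hRi : 0 ≤ Ri) (hb0 : ∀ u v : V, b u v v = 0)
    (hbs0 : ∀ (u : V) (φ : W), bs u φ φ = 0)
    (hc : ∀ (θ : W) (v : V), |c θ v| ≤ CP ^ 2 * ‖θ‖ * ‖v‖)
    (hG : IsSolutionOperator b bs c ν κ Ri f γ G₁ G₂) (u : V) (θ : W) :
    ‖G₁ u θ‖ ≤ Ri * CP ^ 2 * ν⁻¹ * κ⁻¹ * ‖γ‖ + ν⁻¹ * ‖f‖ :=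
  calc ‖G₁ u θ‖ ≤ ν⁻¹ * (Ri * CP ^ 2 * ‖G₂ u θ‖ + ‖f‖) :=
        norm_le_of_velocity_eq hν hRi hb0 hc (norm_nonneg f)
          (fun v => (Real.le_norm_self _).trans (f.le_opNorm v)) (hG u θ).1
    _ ≤ ν⁻¹ * (Ri * CP ^ 2 * (κ⁻¹ * ‖γ‖) + ‖f‖) := by
        gcongr; exact norm_G₂_le hκ hbs0 hG u θ
    _ = Ri * CP ^ 2 * ν⁻¹ * κ⁻¹ * ‖γ‖ + ν⁻¹ * ‖f‖ := by ring

theorem norm_G₂'_le (hκ : 0 < κ) (hM : 0 ≤ M) (hbs0 : ∀ (u : V) (φ : W), bs u φ φ = 0)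
    (hbs : ∀ (u : V) (φ ψ : W), |bs u φ ψ| ≤ M * ‖u‖ * ‖φ‖ * ‖ψ‖)
    (hG' : IsSolutionOperatorDeriv b bs c ν κ Ri G₁ G₂ G₁' G₂')
    (hK₂ : ∀ u θ, ‖G₂ u θ‖ ≤ K₂) (u : V) (θ : W) (w : V) (z : W) :
    ‖G₂' u θ w z‖ ≤ κ⁻¹ * M * K₂ * ‖w‖ :=
  norm_le_of_linearized_temperature_eq hκ hM hbs0 hbs (hK₂ u θ) (hG' u θ w z).2

theorem norm_G₁'_le (hν : 0 < ν) (hκ : 0 < κ) (hRi : 0 ≤ Ri) (hM : 0 ≤ M)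
    (hb0 : ∀ u v : V, b u v v = 0) (hb : ∀ u v w : V, |b u v w| ≤ M * ‖u‖ * ‖v‖ * ‖w‖)
    (hc : ∀ (θ : W) (v : V), |c θ v| ≤ CP ^ 2 * ‖θ‖ * ‖v‖) (hRC : Ri * CP ^ 2 ≤ κ)
    (hG' : IsSolutionOperatorDeriv b bs c ν κ Ri G₁ G₂ G₁' G₂')
    (hK₁ : ∀ u θ, ‖G₁ u θ‖ ≤ K₁) (hg₂ : ∀ u θ w z, ‖G₂' u θ w z‖ ≤ κ⁻¹ * M * K₂ * ‖w‖)
    (u : V) (θ : W) (w : V) (z : W) :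
    ‖G₁' u θ w z‖ ≤ ν⁻¹ * M * (K₁ + K₂) * ‖w‖ :=
  norm_le_of_linearized_velocity_eq hν hκ hRi hM hb0 hb hc hRC (hK₁ u θ) (hg₂ u θ w z)
    (hG' u θ w z).1

theorem norm_G₂_sub_le (hκ : 0 < κ) (hM : 0 ≤ M) (hbs0 : ∀ (u : V) (φ : W), bs u φ φ = 0)
    (hbs : ∀ (u : V) (φ ψ : W), |bs u φ ψ| ≤ M * ‖u‖ * ‖φ‖ * ‖ψ‖)
    (hG : IsSolutionOperator b bs c ν κ Ri f γ G₁ G₂) (hK₂ : ∀ u θ, ‖G₂ u θ‖ ≤ K₂)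
    (u h : V) (θ s : W) :
    ‖G₂ (u + h) (θ + s) - G₂ u θ‖ ≤ κ⁻¹ * M * K₂ * ‖h‖ :=
  norm_le_of_linearized_temperature_eq (u := u) hκ hM hbs0 hbs (hK₂ (u + h) (θ + s)) fun χ => by
    have h₁ := (hG (u + h) (θ + s)).2 χ
    have h₀ := (hG u θ).2 χ
    simp only [map_add, map_sub, LinearMap.add_apply, LinearMap.sub_apply,
      inner_sub_left] at h₁ ⊢
    linarith

theorem norm_G₁_sub_le (hν : 0 < ν) (hκ : 0 < κ) (hRi : 0 ≤ Ri) (hM : 0 ≤ M)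
    (hb0 : ∀ u v : V, b u v v = 0) (hb : ∀ u v w : V, |b u v w| ≤ M * ‖u‖ * ‖v‖ * ‖w‖)
    (hc : ∀ (θ : W) (v : V), |c θ v| ≤ CP ^ 2 * ‖θ‖ * ‖v‖) (hRC : Ri * CP ^ 2 ≤ κ)
    (hG : IsSolutionOperator b bs c ν κ Ri f γ G₁ G₂) (hK₁ : ∀ u θ, ‖G₁ u θ‖ ≤ K₁)
    (u h : V) (θ s : W) (he₂ : ‖G₂ (u + h) (θ + s) - G₂ u θ‖ ≤ κ⁻¹ * M * K₂ * ‖h‖) :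
    ‖G₁ (u + h) (θ + s) - G₁ u θ‖ ≤ ν⁻¹ * M * (K₁ + K₂) * ‖h‖ :=
  norm_le_of_linearized_velocity_eq (u := u) hν hκ hRi hM hb0 hb hc hRC (hK₁ (u + h) (θ + s)) he₂
    fun v => by
      have h₁ := (hG (u + h) (θ + s)).1 v
      have h₀ := (hG u θ).1 v
      simp only [map_add, map_sub, LinearMap.add_apply, LinearMap.sub_apply,
        inner_sub_left] at h₁ ⊢
      linarith

theorem norm_G₂'_sub_le (hκ : 0 < κ) (hM : 0 ≤ M) (hbs0 : ∀ (u : V) (φ : W), bs u φ φ = 0)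
    (hbs : ∀ (u : V) (φ ψ : W), |bs u φ ψ| ≤ M * ‖u‖ * ‖φ‖ * ‖ψ‖)
    (hG' : IsSolutionOperatorDeriv b bs c ν κ Ri G₁ G₂ G₁' G₂') (u h w : V) (θ s z : W)
    (he₂ : ‖G₂ (u + h) (θ + s) - G₂ u θ‖ ≤ κ⁻¹ * M * K₂ * ‖h‖)
    (hg₂ : ‖G₂' (u + h) (θ + s) w z‖ ≤ κ⁻¹ * M * K₂ * ‖w‖) :
    ‖G₂' (u + h) (θ + s) w z - G₂' u θ w z‖ ≤ 2 * κ⁻¹ ^ 2 * M ^ 2 * K₂ * ‖h‖ * ‖w‖ := by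
  set e₂ := G₂ (u + h) (θ + s) - G₂ u θ
  set g₂ := G₂' (u + h) (θ + s) w z
  have heq : ∀ χ, bs u (g₂ - G₂' u θ w z) χ + κ * ⟪g₂ - G₂' u θ w z, χ⟫
      = -bs w e₂ χ - bs h g₂ χ := fun χ => by
    have h₁ := (hG' (u + h) (θ + s) w z).2 χ
    have h₀ := (hG' u θ w z).2 χ
    simp only [e₂, map_add, map_sub, LinearMap.add_apply, LinearMap.sub_apply,
      inner_sub_left] at h₁ ⊢
    linarith
  calc ‖g₂ - G₂' u θ w z‖ ≤ κ⁻¹ * (M * ‖w‖ * ‖e₂‖ + M * ‖h‖ * ‖g₂‖) :=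
        norm_le_of_coercive_eq hκ (by positivity) (hbs0 u _).ge
          (fun χ => by
            linarith [(neg_le_abs _).trans (hbs w e₂ χ), (neg_le_abs _).trans (hbs h g₂ χ)])
          heq
    _ ≤ κ⁻¹ * (M * ‖w‖ * (κ⁻¹ * M * K₂ * ‖h‖) + M * ‖h‖ * (κ⁻¹ * M * K₂ * ‖w‖)) := by
        gcongr
    _ = 2 * κ⁻¹ ^ 2 * M ^ 2 * K₂ * ‖h‖ * ‖w‖ := by ring

theorem norm_G₁'_sub_le (hν : 0 < ν) (hκ : 0 < κ) (hRi : 0 ≤ Ri) (hM : 0 ≤ M)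
    (hb0 : ∀ u v : V, b u v v = 0) (hb : ∀ u v w : V, |b u v w| ≤ M * ‖u‖ * ‖v‖ * ‖w‖)
    (hc : ∀ (θ : W) (v : V), |c θ v| ≤ CP ^ 2 * ‖θ‖ * ‖v‖) (hRC : Ri * CP ^ 2 ≤ κ)
    (hG' : IsSolutionOperatorDeriv b bs c ν κ Ri G₁ G₂ G₁' G₂') (u h w : V) (θ s z : W)
    (he₁ : ‖G₁ (u + h) (θ + s) - G₁ u θ‖ ≤ ν⁻¹ * M * (K₁ + K₂) * ‖h‖)
    (hg₁ : ‖G₁' (u + h) (θ + s) w z‖ ≤ ν⁻¹ * M * (K₁ + K₂) * ‖w‖)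
    (hd₂ : ‖G₂' (u + h) (θ + s) w z - G₂' u θ w z‖ ≤ 2 * κ⁻¹ ^ 2 * M ^ 2 * K₂ * ‖h‖ * ‖w‖) :
    ‖G₁' (u + h) (θ + s) w z - G₁' u θ w z‖
      ≤ 2 * ν⁻¹ * M ^ 2 * (ν⁻¹ * (K₁ + K₂) + κ⁻¹ * K₂) * ‖h‖ * ‖w‖ := by
  set e₁ := G₁ (u + h) (θ + s) - G₁ u θ
  set g₁ := G₁' (u + h) (θ + s) w z
  set d₂ := G₂' (u + h) (θ + s) w z - G₂' u θ w z
  have heq : ∀ v, b u (g₁ - G₁' u θ w z) v + ν * ⟪g₁ - G₁' u θ w z, v⟫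
      = Ri * c d₂ v + (-b w e₁ v - b h g₁ v) := fun v => by
    have h₁ := (hG' (u + h) (θ + s) w z).1 v
    have h₀ := (hG' u θ w z).1 v
    simp only [e₁, d₂, map_add, map_sub, LinearMap.add_apply, LinearMap.sub_apply,
      inner_sub_left] at h₁ ⊢
    linarith
  calc ‖g₁ - G₁' u θ w z‖ ≤ ν⁻¹ * (Ri * CP ^ 2 * ‖d₂‖ + (M * ‖w‖ * ‖e₁‖ + M * ‖h‖ * ‖g₁‖)) :=
        norm_le_of_velocity_eq hν hRi hb0 hc (by positivity)
          (fun v => by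
            linarith [(neg_le_abs _).trans (hb w e₁ v), (neg_le_abs _).trans (hb h g₁ v)])
          heq
    _ ≤ ν⁻¹ * (κ * (2 * κ⁻¹ ^ 2 * M ^ 2 * K₂ * ‖h‖ * ‖w‖)
          + (M * ‖w‖ * (ν⁻¹ * M * (K₁ + K₂) * ‖h‖) + M * ‖h‖ * (ν⁻¹ * M * (K₁ + K₂) * ‖w‖))) := by
        gcongr
    _ = 2 * ν⁻¹ * M ^ 2 * (ν⁻¹ * (K₁ + K₂) + κ⁻¹ * K₂) * ‖h‖ * ‖w‖ := by field_simp; ring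

end Boussinesq

theorem weighted_sq_add_le_inv_min {ν κ a b A B : ℝ} (hν : 0 < ν) (hκ : 0 < κ) (ha : 0 ≤ a)
    (hb : 0 ≤ b) (haA : a ≤ ν⁻¹ * A) (hbB : b ≤ κ⁻¹ * B) :
    ν * a ^ 2 + κ * b ^ 2 ≤ (min ν κ)⁻¹ * (A ^ 2 + B ^ 2) := by
  have hη : 0 < min ν κ := lt_min hν hκ
  have hνa : ν * a ^ 2 ≤ ν⁻¹ * A ^ 2 :=
    calc ν * a ^ 2 ≤ ν * (ν⁻¹ * A) ^ 2 := by gcongr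
      _ = ν⁻¹ * A ^ 2 := by field_simp
  have hκb : κ * b ^ 2 ≤ κ⁻¹ * B ^ 2 :=
    calc κ * b ^ 2 ≤ κ * (κ⁻¹ * B) ^ 2 := by gcongr
      _ = κ⁻¹ * B ^ 2 := by field_simp
  have hνη : ν⁻¹ * A ^ 2 ≤ (min ν κ)⁻¹ * A ^ 2 := by
    gcongr; exact min_le_left ν κ
  have hκη : κ⁻¹ * B ^ 2 ≤ (min ν κ)⁻¹ * B ^ 2 := by
    gcongr; exact min_le_right ν κ
  linarith

theorem sqrt_weighted_sq_add_le_of_le {ν κ M K₁ K₂ a b X Y S T : ℝ} (hν : 0 < ν) (hκ : 0 < κ)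
    (hK₁ : 0 ≤ K₁) (hK₂ : 0 ≤ K₂) (ha : 0 ≤ a) (hb : 0 ≤ b) (hX : 0 ≤ X) (hY : 0 ≤ Y)
    (hS : ν * X ^ 2 ≤ S) (hT : ν * Y ^ 2 ≤ T)
    (haXY : a ≤ 2 * ν⁻¹ * M ^ 2 * (ν⁻¹ * (K₁ + K₂) + κ⁻¹ * K₂) * X * Y)
    (hbXY : b ≤ 2 * κ⁻¹ ^ 2 * M ^ 2 * K₂ * X * Y) :
    √(ν * a ^ 2 + κ * b ^ 2)
      ≤ 2 * ν⁻¹ * (min ν κ)⁻¹ * (√(min ν κ))⁻¹ * M ^ 2 * √(2 * K₁ ^ 2 + 9 * K₂ ^ 2)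
          * √S * √T := by
  set η := min ν κ
  have hη : 0 < η := lt_min hν hκ
  have hνη : ν⁻¹ ≤ η⁻¹ := inv_anti₀ hη (min_le_left ν κ)
  have hκη : κ⁻¹ ≤ η⁻¹ := inv_anti₀ hη (min_le_right ν κ)
  set D := 2 * M ^ 2 * X * Y
  have hA : a ≤ ν⁻¹ * (η⁻¹ * (K₁ + 2 * K₂) * D) := haXY.trans <|
    calc _ = ν⁻¹ * ((ν⁻¹ * (K₁ + K₂) + κ⁻¹ * K₂) * D) := by ring
      _ ≤ ν⁻¹ * ((η⁻¹ * (K₁ + K₂) + η⁻¹ * K₂) * D) := by gcongr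
      _ = ν⁻¹ * (η⁻¹ * (K₁ + 2 * K₂) * D) := by ring
  have hB : b ≤ κ⁻¹ * (η⁻¹ * K₂ * D) := hbXY.trans <|
    calc _ = κ⁻¹ * (κ⁻¹ * K₂ * D) := by ring
      _ ≤ κ⁻¹ * (η⁻¹ * K₂ * D) := by gcongr
  have hK : (K₁ + 2 * K₂) ^ 2 + K₂ ^ 2 ≤ 2 * K₁ ^ 2 + 9 * K₂ ^ 2 := by
    nlinarith [sq_nonneg (K₁ - 2 * K₂)]
  have hS0 : 0 ≤ S := (by positivity : 0 ≤ ν * X ^ 2).trans hS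
  have hT0 : 0 ≤ T := (by positivity : 0 ≤ ν * Y ^ 2).trans hT
  have hXY : X ^ 2 * Y ^ 2 ≤ ν⁻¹ * S * (ν⁻¹ * T) :=
    mul_le_mul ((le_inv_mul_iff₀ hν).2 hS) ((le_inv_mul_iff₀ hν).2 hT) (by positivity)
      (by positivity)
  rw [Real.sqrt_le_left (by positivity)]
  calc ν * a ^ 2 + κ * b ^ 2
      ≤ η⁻¹ * ((η⁻¹ * (K₁ + 2 * K₂) * D) ^ 2 + (η⁻¹ * K₂ * D) ^ 2) :=
        weighted_sq_add_le_inv_min hν hκ ha hb hA hB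
    _ = 4 * η⁻¹ ^ 3 * M ^ 4 * ((K₁ + 2 * K₂) ^ 2 + K₂ ^ 2) * (X ^ 2 * Y ^ 2) := by ring
    _ ≤ 4 * η⁻¹ ^ 3 * M ^ 4 * (2 * K₁ ^ 2 + 9 * K₂ ^ 2) * (ν⁻¹ * S * (ν⁻¹ * T)) := by gcongr
    _ = _ := by
        simp only [mul_pow, inv_pow, Real.sq_sqrt hη.le, Real.sq_sqrt hS0, Real.sq_sqrt hT0,
          Real.sq_sqrt (by positivity : (0 : ℝ) ≤ 2 * K₁ ^ 2 + 9 * K₂ ^ 2)]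
        ring

theorem derivative_lipschitz_Bnorm_general
    {V W : Type*} [NormedAddCommGroup V] [InnerProductSpace ℝ V]
    [NormedAddCommGroup W] [InnerProductSpace ℝ W]
    (ν κ Ri M CP : ℝ) (hν : 0 < ν) (hκ : 0 < κ) (hRi : 0 < Ri) (hM : 0 < M)
    (b : V →ₗ[ℝ] V →ₗ[ℝ] V →ₗ[ℝ] ℝ)
    (hb0 : ∀ u v : V, b u v v = 0)
    (hb : ∀ u v w : V, |b u v w| ≤ M * ‖u‖ * ‖v‖ * ‖w‖)
    (bs : V →ₗ[ℝ] W →ₗ[ℝ] W →ₗ[ℝ] ℝ)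
    (hbs0 : ∀ (u : V) (φ : W), bs u φ φ = 0)
    (hbs : ∀ (u : V) (φ ψ : W), |bs u φ ψ| ≤ M * ‖u‖ * ‖φ‖ * ‖ψ‖)
    (c : W →ₗ[ℝ] V →ₗ[ℝ] ℝ)
    (hc : ∀ (θ : W) (v : V), |c θ v| ≤ CP ^ 2 * ‖θ‖ * ‖v‖)
    (f : V →L[ℝ] ℝ) (γ : W →L[ℝ] ℝ)
    (G₁ : V → W → V) (G₂ : V → W → W)
    (hG : ∀ (u : V) (θ : W),
      (∀ v : V, b u (G₁ u θ) v + ν * ⟪G₁ u θ, v⟫ = Ri * c (G₂ u θ) v + f v) ∧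
      (∀ χ : W, bs u (G₂ u θ) χ + κ * ⟪G₂ u θ, χ⟫ = γ χ))
    (G₁' : V → W → V → W → V) (G₂' : V → W → V → W → W)
    (hG' : ∀ (u : V) (θ : W) (h : V) (s : W),
      (∀ v : V, b h (G₁ u θ) v + b u (G₁' u θ h s) v + ν * ⟪G₁' u θ h s, v⟫
          = Ri * c (G₂' u θ h s) v) ∧
      (∀ χ : W, bs h (G₂ u θ) χ + bs u (G₂' u θ h s) χ + κ * ⟪G₂' u θ h s, χ⟫ = 0))
    (hsd2 : (min ν κ)⁻¹ * Ri * CP ^ 2 < 1)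
    (u h w : V) (θ s z : W) :
    Real.sqrt (ν * ‖G₁' (u + h) (θ + s) w z - G₁' u θ w z‖ ^ 2
        + κ * ‖G₂' (u + h) (θ + s) w z - G₂' u θ w z‖ ^ 2)
      ≤ 2 * ν⁻¹ * (min ν κ)⁻¹ * (Real.sqrt (min ν κ))⁻¹ * M ^ 2
          * Real.sqrt (2 * (Ri * CP ^ 2 * ν⁻¹ * κ⁻¹ * ‖γ‖ + ν⁻¹ * ‖f‖) ^ 2 + 9 * (κ⁻¹ * ‖γ‖) ^ 2)
          * Real.sqrt (ν * ‖h‖ ^ 2 + κ * ‖s‖ ^ 2)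
          * Real.sqrt (ν * ‖w‖ ^ 2 + κ * ‖z‖ ^ 2) := by
  have hRC : Ri * CP ^ 2 ≤ κ := by
    rw [mul_assoc, inv_mul_lt_iff₀ (lt_min hν hκ), mul_one] at hsd2
    exact hsd2.le.trans (min_le_right ν κ)
  have hK₂ := norm_G₂_le hκ hbs0 hG
  have hK₁ := norm_G₁_le hν hκ hRi.le hb0 hbs0 hc hG
  have hg₂ := norm_G₂'_le hκ hM.le hbs0 hbs hG' hK₂
  have hg₁ := norm_G₁'_le hν hκ hRi.le hM.le hb0 hb hc hRC hG' hK₁ hg₂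
  have he₂ := norm_G₂_sub_le hκ hM.le hbs0 hbs hG hK₂ u h θ s
  have he₁ := norm_G₁_sub_le hν hκ hRi.le hM.le hb0 hb hc hRC hG hK₁ u h θ s he₂
  have hd₂ := norm_G₂'_sub_le hκ hM.le hbs0 hbs hG' u h w θ s z he₂ (hg₂ _ _ w z)
  have hd₁ := norm_G₁'_sub_le hν hκ hRi.le hM.le hb0 hb hc hRC hG' u h w θ s z he₁
    (hg₁ _ _ w z) hd₂
  exact sqrt_weighted_sq_add_le_of_le hν hκ (by positivity) (by positivity) (norm_nonneg _)
    (norm_nonneg _) (norm_nonneg h) (norm_nonneg w) (le_add_of_nonneg_right (by positivity))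
    (le_add_of_nonneg_right (by positivity)) hd₁ hd₂

/-- Lemma 3.5 (Lipschitz continuity of `G'` in the B-norm) with constant
`Ĉ_G = 2 ν⁻¹ η^(-3/2) M² (2K₁² + 9K₂²)^(1/2)`. -/
theorem derivative_lipschitz_Bnorm
    {V W : Type*} [NormedAddCommGroup V] [InnerProductSpace ℝ V] [FiniteDimensional ℝ V]
    [NormedAddCommGroup W] [InnerProductSpace ℝ W] [FiniteDimensional ℝ W]
    (ν κ Ri M CP : ℝ) (hν : 0 < ν) (hκ : 0 < κ) (hRi : 0 < Ri) (hM : 0 < M) (hCP : 0 < CP)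
    (b : V →ₗ[ℝ] V →ₗ[ℝ] V →ₗ[ℝ] ℝ)
    (hb0 : ∀ u v : V, b u v v = 0)
    (hb : ∀ u v w : V, |b u v w| ≤ M * ‖u‖ * ‖v‖ * ‖w‖)
    (bs : V →ₗ[ℝ] W →ₗ[ℝ] W →ₗ[ℝ] ℝ)
    (hbs0 : ∀ (u : V) (φ : W), bs u φ φ = 0)
    (hbs : ∀ (u : V) (φ ψ : W), |bs u φ ψ| ≤ M * ‖u‖ * ‖φ‖ * ‖ψ‖)
    (c : W →ₗ[ℝ] V →ₗ[ℝ] ℝ)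
    (hc : ∀ (θ : W) (v : V), |c θ v| ≤ CP ^ 2 * ‖θ‖ * ‖v‖)
    (f : V →L[ℝ] ℝ) (γ : W →L[ℝ] ℝ)
    (G₁ : V → W → V) (G₂ : V → W → W)
    (hG : ∀ (u : V) (θ : W),
      (∀ v : V, b u (G₁ u θ) v + ν * ⟪G₁ u θ, v⟫ = Ri * c (G₂ u θ) v + f v) ∧
      (∀ χ : W, bs u (G₂ u θ) χ + κ * ⟪G₂ u θ, χ⟫ = γ χ))
    (G₁' : V → W → V → W → V) (G₂' : V → W → V → W → W)
    (hG' : ∀ (u : V) (θ : W) (h : V) (s : W),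
      (∀ v : V, b h (G₁ u θ) v + b u (G₁' u θ h s) v + ν * ⟪G₁' u θ h s, v⟫
          = Ri * c (G₂' u θ h s) v) ∧
      (∀ χ : W, bs h (G₂ u θ) χ + bs u (G₂' u θ h s) χ + κ * ⟪G₂' u θ h s, χ⟫ = 0))
    (hsd1 : (min ν κ)⁻¹ ^ 2 * M *
        (2 * (Ri * CP ^ 2 * κ⁻¹ * ‖γ‖ + ‖f‖) + κ⁻¹ ^ 2 * M * ‖γ‖ ^ 2) < 1)
    (hsd2 : (min ν κ)⁻¹ * Ri * CP ^ 2 < 1)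
    (u h w : V) (θ s z : W) :
    Real.sqrt (ν * ‖G₁' (u + h) (θ + s) w z - G₁' u θ w z‖ ^ 2
        + κ * ‖G₂' (u + h) (θ + s) w z - G₂' u θ w z‖ ^ 2)
      ≤ 2 * ν⁻¹ * (min ν κ)⁻¹ * (Real.sqrt (min ν κ))⁻¹ * M ^ 2
          * Real.sqrt (2 * (Ri * CP ^ 2 * ν⁻¹ * κ⁻¹ * ‖γ‖ + ν⁻¹ * ‖f‖) ^ 2 + 9 * (κ⁻¹ * ‖γ‖) ^ 2)
          * Real.sqrt (ν * ‖h‖ ^ 2 + κ * ‖s‖ ^ 2)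
          * Real.sqrt (ν * ‖w‖ ^ 2 + κ * ‖z‖ ^ 2) :=
  derivative_lipschitz_Bnorm_general ν κ Ri M CP hν hκ hRi hM b hb0 hb bs hbs0 hbs c hc f γ G₁ G₂ hG
    G₁' G₂' hG' hsd2 u h w θ s z
end
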